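/- Let X be a set of syllogistic rules in a language L closed under negation, let P' be a nonempty set of atoms, and let Ψ be a complete set of L(P')-formulas (for every φ in L(P'), either φ ∈ Ψ or φ̄ ∈ Ψ). If Ψ ⊩_X ⊥ for some absurdity ⊥ (indirect derivability with reductio ad absurdum), then Ψ ⊢_X ⊥' for some absurdity ⊥' (direct derivability, without reductio ad absurdum). -/

import Mathlib

/-- Literals over a set of atoms `P`: an atom or a negated atom. -/
inductive Lit (P : Type) : Type
  | pos (p : P)
  | neg (p : P)
deriving DecidableEq

/-- Formulas of the (extended) numerical syllogistic: `∃_{≤ i}(ℓ,m)` and `∃_{> i}(ℓ,m)`. -/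
inductive Fm (P : Type) : Type
  | le (i : ℕ) (l m : Lit P)
  | gt (i : ℕ) (l m : Lit P)
deriving DecidableEq

/-- Interpretation of a literal in a structure with domain `A` given by `I`. -/
def Lit.interp {P A : Type} (I : P → Set A) : Lit P → Set A
  | .pos p => I p
  | .neg p => (I p)ᶜ

/-- Truth of a formula in a structure: cardinality constraints on `ℓ^𝔄 ∩ m^𝔄`. -/
def Fm.sat {P A : Type} (I : P → Set A) : Fm P → Prop
  | .le i l m => Cardinal.mk ↥(l.interp I ∩ m.interp I) ≤ (i : Cardinal)
  | .gt i l m => (i : Cardinal) < Cardinal.mk ↥(l.interp I ∩ m.interp I)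

/-- Semantic entailment: every structure (nonempty domain) satisfying `Θ` satisfies `ψ`. -/
def Entails {P : Type} (Θ : Set (Fm P)) (ψ : Fm P) : Prop :=
  ∀ (A : Type) (_ : Nonempty A) (I : P → Set A), (∀ φ ∈ Θ, φ.sat I) → ψ.sat I

/-- The negation map, swapping `∃_{≤ i}` and `∃_{> i}`. -/
def Fm.negate {P : Type} : Fm P → Fm P
  | .le i l m => .gt i l m
  | .gt i l m => .le i l m

/-- Swap the (unordered) arguments of a formula. -/
def Fm.swap {P : Type} : Fm P → Fm P
  | .le i l m => .le i m l
  | .gt i l m => .gt i m l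

/-- The numerical index of a formula. -/
def Fm.idx {P : Type} : Fm P → ℕ
  | .le i _ _ => i
  | .gt i _ _ => i

/-- The atom of a literal. -/
def Lit.atom {P : Type} : Lit P → P
  | .pos p => p
  | .neg p => p

/-- The two (unordered) literal arguments of a formula. -/
def Fm.args {P : Type} : Fm P → Lit P × Lit P
  | .le _ l m => (l, m)
  | .gt _ l m => (l, m)

/-- All atoms of a formula lie in `S`. -/
def Fm.atomsIn {P : Type} (S : Set P) (φ : Fm P) : Prop :=
  φ.args.1.atom ∈ S ∧ φ.args.2.atom ∈ S

/-- Applying a substitution to a literal. -/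
def Lit.map {P : Type} (g : P → P) : Lit P → Lit P
  | .pos p => .pos (g p)
  | .neg p => .neg (g p)

/-- Applying a substitution to a formula. -/
def Fm.map {P : Type} (g : P → P) : Fm P → Fm P
  | .le i l m => .le i (l.map g) (m.map g)
  | .gt i l m => .gt i (l.map g) (m.map g)

/-- A syllogistic rule: a finite set of antecedents and a consequent. -/
structure Rule (P : Type) where
  ants : Finset (Fm P)
  con : Fm P

/-- The direct syllogistic derivation relation `⊢_X`. -/
inductive Derives {P : Type} (X : Set (Rule P)) : Set (Fm P) → Fm P → Prop
  | prem {Θ : Set (Fm P)} {θ : Fm P} : θ ∈ Θ → Derives X Θ θ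
  | rule {Θ : Set (Fm P)} (r : Rule P) (g : P → P) : r ∈ X →
      (∀ ψ ∈ r.ants, Derives X Θ (ψ.map g)) → Derives X Θ (r.con.map g)

/-- The indirect syllogistic derivation relation `⊩_X` (with reductio ad absurdum). -/
inductive IndDerives {P : Type} (X : Set (Rule P)) : Set (Fm P) → Fm P → Prop
  | prem {Θ : Set (Fm P)} {θ : Fm P} : θ ∈ Θ → IndDerives X Θ θ
  | rule {Θ : Set (Fm P)} (r : Rule P) (g : P → P) : r ∈ X →
      (∀ ψ ∈ r.ants, IndDerives X Θ (ψ.map g)) → IndDerives X Θ (r.con.map g)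
  | raa {Θ : Set (Fm P)} {θ : Fm P} (i : ℕ) (p : P) :
      IndDerives X (insert θ Θ) (Fm.gt i (Lit.pos p) (Lit.neg p)) →
      IndDerives X Θ θ.negate

/-!
Send every atom into `P'` by a retraction `f` (possible as `P'` is nonempty) and follow the
indirect derivation, translated by `f`. A reductio step on a formula `θ` of index `≤ z` is
removed by completeness: either `θ̄ᶠ ∈ Ψ` already, or `θᶠ ∈ Ψ`, so the reductio hypothesis is
redundant and the inner derivation of an absurdity is already a direct one from `Ψ`. A reductio
step on `θ` of index `> z` only matters when `θ̄` is an absurdity; then `θ` is an `∃_{≤ j}`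
formula of index `> z`, which no rule of `X` can consume (all rules have indices `≤ z`) and
which is itself no absurdity, so it is never needed.
-/

namespace Fm

variable {P : Type}

def IsAbsurd (φ : Fm P) : Prop :=
  ∃ (i : ℕ) (p : P), φ = .gt i (.pos p) (.neg p)

lemma _root_.Lit.map_map (f g : P → P) (l : Lit P) : (l.map g).map f = l.map (f ∘ g) := by
  cases l <;> rfl

lemma map_map (f g : P → P) (φ : Fm P) : (φ.map g).map f = φ.map (f ∘ g) := by
  cases φ <;> simp only [Fm.map, Lit.map_map]

lemma idx_map (f : P → P) (φ : Fm P) : (φ.map f).idx = φ.idx := by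
  cases φ <;> rfl

lemma idx_negate (φ : Fm P) : φ.negate.idx = φ.idx := by
  cases φ <;> rfl

lemma negate_map (f : P → P) (φ : Fm P) : φ.negate.map f = (φ.map f).negate := by
  cases φ <;> rfl

lemma _root_.Lit.map_eq_self {S : Set P} {f : P → P} (hf : ∀ q ∈ S, f q = q) {l : Lit P}
    (hl : l.atom ∈ S) : l.map f = l := by
  cases l <;> simp_all [Lit.map, Lit.atom]

lemma map_eq_self {S : Set P} {f : P → P} (hf : ∀ q ∈ S, f q = q) {φ : Fm P}
    (hφ : φ.atomsIn S) : φ.map f = φ := by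
  obtain ⟨hl, hm⟩ := hφ
  cases φ <;> simp only [Fm.args] at hl hm <;>
    simp only [Fm.map, Lit.map_eq_self hf hl, Lit.map_eq_self hf hm]

lemma _root_.Lit.atom_map (f : P → P) (l : Lit P) : (l.map f).atom = f l.atom := by
  cases l <;> rfl

lemma atomsIn_map {S : Set P} {f : P → P} (hf : ∀ q, f q ∈ S) (φ : Fm P) :
    (φ.map f).atomsIn S := by
  cases φ <;> exact ⟨by simp only [Fm.map, Fm.args, Lit.atom_map, hf],
    by simp only [Fm.map, Fm.args, Lit.atom_map, hf]⟩

lemma IsAbsurd.map {φ : Fm P} (h : φ.IsAbsurd) (f : P → P) : (φ.map f).IsAbsurd := by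
  obtain ⟨i, p, rfl⟩ := h
  exact ⟨i, f p, rfl⟩

lemma not_isAbsurd_of_isAbsurd_negate {φ : Fm P} (h : φ.negate.IsAbsurd) : ¬ φ.IsAbsurd := by
  rintro ⟨i, p, rfl⟩
  obtain ⟨j, q, h⟩ := h
  cases h

end Fm

lemma Set.exists_retraction {P : Type} {S : Set P} (hS : S.Nonempty) :
    ∃ f : P → P, (∀ q, f q ∈ S) ∧ ∀ q ∈ S, f q = q := by
  classical
  obtain ⟨p₀, hp₀⟩ := hS
  refine ⟨fun q => if q ∈ S then q else p₀, fun q => ?_, fun q hq => if_pos hq⟩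
  dsimp only
  split_ifs with hq
  exacts [hq, hp₀]

def Inconsistent {P : Type} (X : Set (Rule P)) (Θ : Set (Fm P)) : Prop :=
  ∃ (i : ℕ) (p : P), Derives X Θ (.gt i (.pos p) (.neg p))

section RaaElimination

variable {P : Type} {z : ℕ} {X : Set (Rule P)} {P' : Set P} {Ψ : Set (Fm P)} {f : P → P}

lemma Derives.rule_map (r : Rule P) (g : P → P) (hr : r ∈ X)
    (h : ∀ ψ ∈ r.ants, Derives X Ψ ((ψ.map g).map f)) : Derives X Ψ ((r.con.map g).map f) := by
  rw [Fm.map_map]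
  exact .rule r (f ∘ g) hr fun ψ hψ => Fm.map_map f g ψ ▸ h ψ hψ

theorem IndDerives.inconsistent_or_derives_map
    (hX : ∀ r ∈ X, r.con.idx ≤ z ∧ ∀ ψ ∈ r.ants, ψ.idx ≤ z)
    (hcomplete : ∀ φ : Fm P, φ.idx ≤ z → φ.atomsIn P' → φ ∈ Ψ ∨ φ.negate ∈ Ψ)
    (hf : ∀ q, f q ∈ P') {Θ : Set (Fm P)} {θ : Fm P} (h : IndDerives X Θ θ)
    (hΘ : ∀ φ ∈ Θ, φ.map f ∈ Ψ ∨ z < φ.idx ∧ ¬ (φ.map f).IsAbsurd) :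
    Inconsistent X Ψ ∨ (θ.idx ≤ z ∨ θ.IsAbsurd → Derives X Ψ (θ.map f)) := by
  induction h with
  | @prem Θ θ hθ =>
    rcases hΘ θ hθ with hΨ | ⟨hidx, hnabs⟩
    · exact .inr fun _ => .prem hΨ
    · refine .inr fun hrel => absurd hrel ?_
      rintro (hle | habs)
      exacts [hidx.not_ge hle, hnabs (habs.map f)]
  | @rule Θ r g hr _ ih =>
    by_cases hants : ∀ ψ ∈ r.ants, Derives X Ψ ((ψ.map g).map f)
    · exact .inr fun _ => Derives.rule_map r g hr hants
    · push Not at hants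
      obtain ⟨ψ, hψ, hnd⟩ := hants
      refine (ih ψ hψ hΘ).imp_right fun hd => absurd (hd (.inl ?_)) hnd
      rw [Fm.idx_map]
      exact (hX r hr).2 ψ hψ
  | @raa Θ θ i p _ ih =>
    have of_ih : (∀ φ ∈ insert θ Θ, φ.map f ∈ Ψ ∨ z < φ.idx ∧ ¬ (φ.map f).IsAbsurd) →
        Inconsistent X Ψ := fun hΘ' =>
      (ih hΘ').elim id fun hd => ⟨i, f p, hd (.inr ⟨i, p, rfl⟩)⟩
    by_cases hidx : θ.idx ≤ z
    · rcases hcomplete (θ.map f) ((θ.idx_map f).trans_le hidx) (Fm.atomsIn_map hf θ)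
        with hθ | hθ
      · exact .inl (of_ih (Set.forall_mem_insert.2 ⟨.inl hθ, hΘ⟩))
      · exact .inr fun _ => Fm.negate_map f θ ▸ .prem hθ
    by_cases hneg : θ.negate.IsAbsurd
    · have hnabs : ¬ (θ.map f).IsAbsurd :=
        Fm.not_isAbsurd_of_isAbsurd_negate (Fm.negate_map f θ ▸ hneg.map f)
      exact .inl (of_ih (Set.forall_mem_insert.2 ⟨.inr ⟨not_le.1 hidx, hnabs⟩, hΘ⟩))
    · refine .inr fun hrel => absurd hrel ?_
      rw [Fm.idx_negate]
      exact not_or.2 ⟨hidx, hneg⟩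

end RaaElimination

/-- for a complete set `Ψ` of `L(P')`-formulas, indirect derivability of an
absurdity from `Ψ` implies direct derivability of an absurdity from `Ψ`. -/
theorem complete_raa_elimination (z : ℕ) (X : Set (Rule ℕ))
    (hX : ∀ r ∈ X, r.con.idx ≤ z ∧ ∀ ψ ∈ r.ants, ψ.idx ≤ z)
    (P' : Set ℕ) (hP' : P'.Nonempty) (Ψ : Set (Fm ℕ))
    (hΨ : ∀ φ ∈ Ψ, φ.idx ≤ z ∧ φ.atomsIn P')
    (hcomplete : ∀ φ : Fm ℕ, φ.idx ≤ z → φ.atomsIn P' → φ ∈ Ψ ∨ φ.negate ∈ Ψ)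
    (habs : ∃ (i : ℕ) (p : ℕ), IndDerives X Ψ (Fm.gt i (Lit.pos p) (Lit.neg p))) :
    ∃ (i : ℕ) (p : ℕ), Derives X Ψ (Fm.gt i (Lit.pos p) (Lit.neg p)) := by
  obtain ⟨f, hf, hfP'⟩ := Set.exists_retraction hP'
  obtain ⟨i, p, h⟩ := habs
  have hΨf : ∀ φ ∈ Ψ, φ.map f ∈ Ψ ∨ z < φ.idx ∧ ¬ (φ.map f).IsAbsurd := fun φ hφ =>
    .inl ((Fm.map_eq_self hfP' (hΨ φ hφ).2).symm ▸ hφ)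
  exact (h.inconsistent_or_derives_map hX hcomplete hf hΨf).elim id
    fun hd => ⟨i, f p, hd (.inr ⟨i, p, rfl⟩)⟩
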